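/- (Theorem 1.6(b), positivity) Let A, B be subspaces of E and o an E-orbit contained in X_A. For every element f of the basis 𝓑_{oB} of [[oB]] and every basis element [𝒪'₁]^{ε'} of 𝓕 (𝒪'₁ an E-orbit in X²_{DD'}, ε' ∈ (D∩D')*, D, D' subspaces of E), the product f ⋆ [𝒪'₁]^{ε'} is a linear combination of elements of 𝓑_{oB} with coefficients in the nonnegative integers ℕ. -/
import Mathlib


open scoped Classical

set_option linter.unusedSectionVars false

noncomputable section

namespace Lusztig

variable (E X : Type) [AddCommGroup E] [Module (ZMod 2) E] [Fintype E]
  [Fintype X] [AddAction E X]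

/-- The stabilizer of `x` in `E`, as a subset of `E`. -/
def stabSet (x : X) : Set E := {e : E | e +ᵥ x = x}

/-- `X_A`: the set of points of `X` whose stabilizer in `E` equals `A`. -/
def XA (A : Submodule (ZMod 2) E) : Set X := {x : X | stabSet E X x = (A : Set E)}

/-- `X²_{AB} = X_A × X_B`. -/
def X2 (A B : Submodule (ZMod 2) E) : Set (X × X) := (XA E X A) ×ˢ (XA E X B)

/-- The `E`-orbit of `x` in `X`. -/
def orb (x : X) : Set X := {y : X | ∃ e : E, y = e +ᵥ x}

/-- The `E`-orbit of `(x,y)` for the diagonal action of `E` on `X × X`. -/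
def orb2 (x y : X) : Set (X × X) := {q : X × X | ∃ e : E, q = (e +ᵥ x, e +ᵥ y)}

/-- `O` is an `E`-orbit (for the diagonal action) contained in `X²_{AB}`. -/
def IsOrb2 (A B : Submodule (ZMod 2) E) (O : Set (X × X)) : Prop :=
  ∃ x y : X, x ∈ XA E X A ∧ y ∈ XA E X B ∧ O = orb2 E X x y

/-- The `E × B`-orbit of `(x,y)` for the action `(e,b)·(x,y) = (e+b+x, e+y)`. -/
def orbEB (B : Submodule (ZMod 2) E) (x y : X) : Set (X × X) :=
  {q : X × X | ∃ e b : E, b ∈ B ∧ q = ((e + b) +ᵥ x, e +ᵥ y)}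

/-- `M` is an `E × B`-orbit contained in `X²_{AC}` for the action
`(e,b)·(x,y) = (e+b+x, e+y)`. -/
def IsOrbEB (A B C : Submodule (ZMod 2) E) (M : Set (X × X)) : Prop :=
  ∃ x y : X, x ∈ XA E X A ∧ y ∈ XA E X C ∧ M = orbEB E X B x y

/-- Image under the first projection. -/
def p1 (S : Set (X × X)) : Set X := Prod.fst '' S

/-- Image under the second projection. -/
def p2 (S : Set (X × X)) : Set X := Prod.snd '' S

/-- `U_{ABC} = {(a,b,c) ∈ A × B × C : a + b + c = 0}`. -/
def UABC (A B C : Submodule (ZMod 2) E) : Set (E × E × E) :=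
  {t : E × E × E | t.1 ∈ A ∧ t.2.1 ∈ B ∧ t.2.2 ∈ C ∧ t.1 + t.2.1 + t.2.2 = 0}

/-- `X̄_C`: the set of `E`-orbits contained in `X_C`. -/
def barX (C : Submodule (ZMod 2) E) : Set (Set X) :=
  {s : Set X | ∃ x ∈ XA E X C, s = orb E X x}

/-- The dual (space of linear forms `P → ℤ/2`) of a subspace `P` of `E`. -/
abbrev Dl (P : Submodule (ZMod 2) E) : Type := ↥P →ₗ[ZMod 2] ZMod 2

/-- Restriction of a linear form along an inclusion of subspaces. -/
def res {P Q : Submodule (ZMod 2) E} (h : P ≤ Q) (φ : Dl E Q) : Dl E P :=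
  φ.comp (Submodule.inclusion h)

theorem leAB (A B C : Submodule (ZMod 2) E) : A ⊓ B ⊓ C ≤ A ⊓ B := inf_le_left
theorem leBC (A B C : Submodule (ZMod 2) E) : A ⊓ B ⊓ C ≤ B ⊓ C :=
  le_inf (inf_le_left.trans inf_le_right) inf_le_right
theorem leAC (A B C : Submodule (ZMod 2) E) : A ⊓ B ⊓ C ≤ A ⊓ C :=
  le_inf (inf_le_left.trans inf_le_left) inf_le_right
theorem leBA (A B : Submodule (ZMod 2) E) : A ⊓ B ≤ B ⊓ A := le_inf inf_le_right inf_le_left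

/-- The convolution product `𝓕_{AB} × 𝓕_{BC} → 𝓕_{AC}`. -/
def conv (A B C : Submodule (ZMod 2) E)
    (f₁ : (X × X) × Dl E (A ⊓ B) → ℂ) (f₂ : (X × X) × Dl E (B ⊓ C) → ℂ) :
    (X × X) × Dl E (A ⊓ C) → ℂ :=
  fun p =>
    (∑ᶠ (y : X) (_ : y ∈ XA E X B) (ε₁ : Dl E (A ⊓ B)) (ε₂ : Dl E (B ⊓ C))
        (_ : res E (leAB E A B C) ε₁ + res E (leBC E A B C) ε₂
              + res E (leAC E A B C) p.2 = 0),
        f₁ ((p.1.1, y), ε₁) * f₂ ((y, p.1.2), ε₂)) *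
      (Nat.card ↥(A ⊓ B ⊓ C) : ℂ) / (Nat.card ↥(A ⊓ C) : ℂ)

/-- The defining conditions for membership in `𝓕_{AB}`: supported on `X²_{AB}` and
invariant under the diagonal `E`-action. -/
def MemF (A B : Submodule (ZMod 2) E) (f : (X × X) × Dl E (A ⊓ B) → ℂ) : Prop :=
  (∀ p : (X × X) × Dl E (A ⊓ B), p.1 ∉ X2 E X A B → f p = 0) ∧
  (∀ (e : E) (x y : X) (ε : Dl E (A ⊓ B)), f ((e +ᵥ x, e +ᵥ y), ε) = f ((x, y), ε))

/-- `𝓕_{AB}` as a subspace of the space of all functions. -/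
def FAB (A B : Submodule (ZMod 2) E) : Submodule ℂ ((X × X) × Dl E (A ⊓ B) → ℂ) where
  carrier := {f | MemF E X A B f}
  add_mem' := by
    intro a b ha hb
    exact ⟨fun p hp => by simp [ha.1 p hp, hb.1 p hp],
      fun e x y ε => by simp [Pi.add_apply, ha.2 e x y ε, hb.2 e x y ε]⟩
  zero_mem' := ⟨fun p hp => rfl, fun e x y ε => rfl⟩
  smul_mem' := by
    intro c a ha
    exact ⟨fun p hp => by simp [Pi.smul_apply, ha.1 p hp],
      fun e x y ε => by simp [Pi.smul_apply, ha.2 e x y ε]⟩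

/-- `[Ξ]^ε`. -/
def br (A B : Submodule (ZMod 2) E) (Ξ : Set (X × X)) (ε : Dl E (A ⊓ B)) :
    (X × X) × Dl E (A ⊓ B) → ℂ :=
  fun p => if p.1 ∈ Ξ ∧ p.2 = ε then 1 else 0

/-- The ambient space of `𝓕 = ⊕_{A,B} 𝓕_{AB}` (all summands at once). -/
abbrev FF : Type := ∀ A B : Submodule (ZMod 2) E, (X × X) × Dl E (A ⊓ B) → ℂ

/-- The embedding of the `(A,B)` summand into `𝓕`. -/
def emb (A B : Submodule (ZMod 2) E) (f : (X × X) × Dl E (A ⊓ B) → ℂ) : FF E X :=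
  fun A' B' p =>
    if h : A = A' ∧ B = B' then f (p.1, cast (by rw [h.1, h.2]) p.2) else 0

/-- `𝓕` as a subspace of `FF`: componentwise supported on `X²_{AB}` and `E`-invariant. -/
def FFsub : Submodule ℂ (FF E X) where
  carrier := {g | ∀ A B, MemF E X A B (g A B)}
  add_mem' := by
    intro a b ha hb A B
    exact ⟨fun p hp => by simp [(ha A B).1 p hp, (hb A B).1 p hp],
      fun e x y ε => by simp [(ha A B).2 e x y ε, (hb A B).2 e x y ε]⟩
  zero_mem' := fun A B => ⟨fun p hp => rfl, fun e x y ε => rfl⟩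
  smul_mem' := by
    intro c a ha A B
    exact ⟨fun p hp => by simp [(ha A B).1 p hp],
      fun e x y ε => by simp [(ha A B).2 e x y ε]⟩

/-- The product on `𝓕` (zero between summands `𝓕_{AB}`, `𝓕_{B'C}` with `B ≠ B'`). -/
def mulFF (g h : FF E X) : FF E X :=
  fun A C => ∑ᶠ B : Submodule (ZMod 2) E, conv E X A B C (g A B) (h B C)

/-- The diagonal `Δ_A ⊆ X²_{AA}`. -/
def diagSet (A : Submodule (ZMod 2) E) : Set (X × X) :=
  {q : X × X | q.1 ∈ XA E X A ∧ q.2 = q.1}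

/-- The element `∑_A [Δ_A]^0` of `𝓕`. -/
def unitFF : FF E X :=
  ∑ᶠ A : Submodule (ZMod 2) E, emb E X A A (br E X A A (diagSet E X A) 0)

/-- The map `f ↦ f^#` on `𝓕`. -/
def shFF (g : FF E X) : FF E X :=
  fun A B p => g B A ((p.1.2, p.1.1), res E (leBA E B A) p.2)

/-- `𝒪 • 𝒪'`. -/
def bullet (O O' : Set (X × X)) : Set (X × X) :=
  {q : X × X | ∃ y : X, (q.1, y) ∈ O ∧ (y, q.2) ∈ O'}

/-- `∑_{ε ∈ α̃} [𝓜]^ε ∈ 𝓕_{AC}`, where `α̃` is the fibre of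
`(A∩C)* → (A∩B∩C)*` over `α`. -/
def bSum (A B C : Submodule (ZMod 2) E) (M : Set (X × X)) (α : Dl E (A ⊓ B ⊓ C)) :
    (X × X) × Dl E (A ⊓ C) → ℂ :=
  ∑ᶠ (ε : Dl E (A ⊓ C)) (_ : res E (leAC E A B C) ε = α), br E X A C M ε

/-- The set `𝓑_{oBC} ⊆ 𝓕` (embedded in `FF`). -/
def BoBC (A B C : Submodule (ZMod 2) E) (o : Set X) : Set (FF E X) :=
  {g | ∃ (M : Set (X × X)) (α : Dl E (A ⊓ B ⊓ C)),
      IsOrbEB E X A B C M ∧ p1 X M = o ∧ g = emb E X A C (bSum E X A B C M α)}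

/-- The set `𝓑_{oB} = ⊔_C 𝓑_{oBC}`. -/
def BoB (A B : Submodule (ZMod 2) E) (o : Set X) : Set (FF E X) :=
  ⋃ C : Submodule (ZMod 2) E, BoBC E X A B C o

/-- `[[oB]]`, the `ℂ`-span of `𝓑_{oB}`. -/
def ooB (A B : Submodule (ZMod 2) E) (o : Set X) : Submodule ℂ (FF E X) :=
  Submodule.span ℂ (BoB E X A B o)

/-! ### Auxiliary material -/

noncomputable instance fintypeDl (P : Submodule (ZMod 2) E) : Fintype (Dl E P) :=
  Fintype.ofInjective (fun f => (f : ↥P → ZMod 2)) DFunLike.coe_injective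

theorem char2_add_self {M : Type*} [AddCommGroup M] [Module (ZMod 2) M] (v : M) :
    v + v = 0 := by
  have h := two_smul (ZMod 2) v
  rw [show (2 : ZMod 2) = 0 by decide, zero_smul] at h
  exact h.symm

theorem res_apply {P Q : Submodule (ZMod 2) E} (h : P ≤ Q) (φ : Dl E Q) (v : ↥P) :
    res E h φ v = φ ⟨v.1, h v.2⟩ := rfl

theorem res_add {P Q : Submodule (ZMod 2) E} (h : P ≤ Q) (φ ψ : Dl E Q) :
    res E h (φ + ψ) = res E h φ + res E h ψ :=
  LinearMap.add_comp _ _ _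

/-- Extension of linear forms along an injective map, over the field `ZMod 2`. -/
theorem exists_comp {V W : Type*} [AddCommGroup V] [AddCommGroup W]
    [Module (ZMod 2) V] [Module (ZMod 2) W] (i : V →ₗ[ZMod 2] W)
    (hi : Function.Injective i) (f : V →ₗ[ZMod 2] ZMod 2) :
    ∃ g : W →ₗ[ZMod 2] ZMod 2, g.comp i = f := by
  obtain ⟨g, hg⟩ := LinearMap.exists_extend
    (f.comp ((LinearEquiv.ofInjective i hi).symm : _ ≃ₗ[ZMod 2] _).toLinearMap)
  refine ⟨g, ?_⟩
  ext v
  have h1 : ((LinearMap.range i).subtype) ⟨i v, LinearMap.mem_range_self i v⟩ = i v := rfl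
  have h2 : (⟨i v, LinearMap.mem_range_self i v⟩ : ↥(LinearMap.range i))
      = LinearEquiv.ofInjective i hi v := by
    apply Subtype.ext; rw [LinearEquiv.ofInjective_apply]
  calc g (i v) = g (((LinearMap.range i).subtype) ⟨i v, LinearMap.mem_range_self i v⟩) := rfl
    _ = f ((LinearEquiv.ofInjective i hi).symm ⟨i v, LinearMap.mem_range_self i v⟩) := by
        rw [← LinearMap.comp_apply, hg]; rfl
    _ = f v := by rw [h2, LinearEquiv.symm_apply_apply]

theorem res_surjective {P Q : Submodule (ZMod 2) E} (h : P ≤ Q) :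
    Function.Surjective (res E h) := by
  intro α
  obtain ⟨g, hg⟩ := exists_comp (Submodule.inclusion h)
    (Submodule.inclusion_injective h) α
  exact ⟨g, hg⟩

/-- Gluing of linear forms: two forms on subspaces `P, Q ≤ V` agreeing on `P ⊓ Q`
extend to a common form on `V`. -/
theorem glue_res {P Q V : Submodule (ZMod 2) E} (hP : P ≤ V) (hQ : Q ≤ V)
    (α : Dl E P) (γ : Dl E Q)
    (hc : ∀ (v : E) (h1 : v ∈ P) (h2 : v ∈ Q), α ⟨v, h1⟩ = γ ⟨v, h2⟩) :
    ∃ φ : Dl E V, res E hP φ = α ∧ res E hQ φ = γ := by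
  obtain ⟨A₁, hA₁⟩ := exists_comp P.subtype (Submodule.injective_subtype P) α
  have hA₁' : ∀ (v : E) (hv : v ∈ P), A₁ v = α ⟨v, hv⟩ := by
    intro v hv
    calc A₁ v = (A₁.comp P.subtype) ⟨v, hv⟩ := rfl
      _ = α ⟨v, hv⟩ := by rw [hA₁]
  set γ' : Dl E Q := γ - A₁.comp Q.subtype with hγ'
  set g : ↥Q →ₗ[ZMod 2] (E ⧸ P) := P.mkQ.comp Q.subtype with hgdef
  have hker : LinearMap.ker g ≤ LinearMap.ker γ' := by
    intro q hq
    have hqP : (q : E) ∈ P := by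
      have : P.mkQ (q : E) = 0 := hq
      rwa [Submodule.mkQ_apply, Submodule.Quotient.mk_eq_zero] at this
    have : γ' q = γ q - A₁ (q : E) := rfl
    rw [LinearMap.mem_ker, this, hA₁' _ hqP, hc _ hqP q.2, sub_self]
  obtain ⟨Ψ, hΨ⟩ := LinearMap.exists_extend
    ((Submodule.liftQ (LinearMap.ker g) γ' hker).comp
      ((g.quotKerEquivRange).symm : _ ≃ₗ[ZMod 2] _).toLinearMap)
  set B₁ := Ψ.comp P.mkQ with hB₁def
  have hB₁P : ∀ v ∈ P, B₁ v = 0 := by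
    intro v hv
    have : P.mkQ v = 0 := by rw [Submodule.mkQ_apply, Submodule.Quotient.mk_eq_zero]; exact hv
    calc B₁ v = Ψ (P.mkQ v) := rfl
      _ = 0 := by rw [this, map_zero]
  have hB₁Q : ∀ q : ↥Q, B₁ (q : E) = γ' q := by
    intro q
    have hmem : g q ∈ LinearMap.range g := LinearMap.mem_range_self g q
    have h1 : (⟨g q, hmem⟩ : ↥(LinearMap.range g))
        = g.quotKerEquivRange (Submodule.Quotient.mk q) := by
      apply Subtype.ext
      rw [LinearMap.quotKerEquivRange_apply_mk]
    have h2 : B₁ (q : E) = Ψ ((LinearMap.range g).subtype ⟨g q, hmem⟩) := rfl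
    rw [h2]
    have h3 := LinearMap.congr_fun hΨ (⟨g q, hmem⟩ : ↥(LinearMap.range g))
    simp only [LinearMap.coe_comp, Function.comp_apply, LinearEquiv.coe_coe] at h3
    rw [h3, h1, LinearEquiv.symm_apply_apply, Submodule.liftQ_apply]
  refine ⟨(A₁ + B₁).comp V.subtype, ?_, ?_⟩
  · ext u
    have : res E hP ((A₁ + B₁).comp V.subtype) u = A₁ (u : E) + B₁ (u : E) := rfl
    rw [this, hA₁' _ u.2, hB₁P _ u.2, add_zero]
  · ext q
    have h4 : res E hQ ((A₁ + B₁).comp V.subtype) q = A₁ (q : E) + B₁ (q : E) := rfl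
    rw [h4, hB₁Q q]
    have : γ' q = γ q - A₁ (q : E) := rfl
    rw [this]
    abel

/-! #### Orbit lemmas -/

theorem vadd_cancel {e : E} {u v : X} (h : e +ᵥ u = e +ᵥ v) : u = v := by
  have := congrArg (fun w => (-e) +ᵥ w) h
  simpa [vadd_vadd] using this

theorem stabSet_vadd (e : E) (x : X) : stabSet E X (e +ᵥ x) = stabSet E X x := by
  ext s
  simp only [stabSet, Set.mem_setOf_eq]
  constructor <;> intro h
  · have h2 : s +ᵥ (e +ᵥ x) = e +ᵥ (s +ᵥ x) := by
      rw [vadd_vadd, vadd_vadd, add_comm]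
    rw [h2] at h
    exact vadd_cancel E X h
  · rw [vadd_vadd, add_comm, ← vadd_vadd, h]

theorem XA_vadd (P : Submodule (ZMod 2) E) (e : E) {x : X} (hx : x ∈ XA E X P) :
    e +ᵥ x ∈ XA E X P := by
  simp only [XA, Set.mem_setOf_eq] at *
  rw [stabSet_vadd]; exact hx

theorem vadd_eq_self_of_mem {P : Submodule (ZMod 2) E} {x : X} (hx : x ∈ XA E X P)
    {a : E} (ha : a ∈ P) : a +ᵥ x = x := by
  have : a ∈ stabSet E X x := by rw [hx]; exact ha
  exact this

theorem orb_eq_of_mem {x u : X} (h : u ∈ orb E X x) : orb E X u = orb E X x := by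
  obtain ⟨e, rfl⟩ := h
  ext w
  simp only [orb, Set.mem_setOf_eq]
  constructor
  · rintro ⟨e', rfl⟩
    exact ⟨e' + e, by rw [vadd_vadd]⟩
  · rintro ⟨e', rfl⟩
    exact ⟨e' + e, by rw [vadd_vadd, add_assoc, char2_add_self, add_zero]⟩

theorem mem_orbEB_self (B : Submodule (ZMod 2) E) (x y : X) :
    (x, y) ∈ orbEB E X B x y :=
  ⟨0, 0, zero_mem B, by simp⟩

theorem orbEB_vadd {B : Submodule (ZMod 2) E} {x y u v : X}
    (h : (u, v) ∈ orbEB E X B x y) (e b : E) (hb : b ∈ B) :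
    ((e + b) +ᵥ u, e +ᵥ v) ∈ orbEB E X B u v := by
  exact ⟨e, b, hb, rfl⟩

theorem orbEB_mem_mono {B : Submodule (ZMod 2) E} {x y u v : X}
    (h : (u, v) ∈ orbEB E X B x y) : orbEB E X B u v ⊆ orbEB E X B x y := by
  obtain ⟨e, b, hb, huv⟩ := h
  simp only [Prod.mk.injEq] at huv
  obtain ⟨h1, h2⟩ := huv
  rintro ⟨w1, w2⟩ ⟨e', b', hb', hw⟩
  simp only [Prod.mk.injEq] at hw
  obtain ⟨hw1, hw2⟩ := hw
  refine ⟨e' + e, b' + b, add_mem hb' hb, ?_⟩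
  simp only [Prod.mk.injEq]
  constructor
  · show w1 = _
    rw [hw1, h1, vadd_vadd, add_add_add_comm]
  · show w2 = _
    rw [hw2, h2, vadd_vadd]

theorem orbEB_eq_of_mem {B : Submodule (ZMod 2) E} {x y u v : X}
    (h : (u, v) ∈ orbEB E X B x y) : orbEB E X B u v = orbEB E X B x y := by
  obtain ⟨e, b, hb, huv⟩ := h
  simp only [Prod.mk.injEq] at huv
  obtain ⟨h1, h2⟩ := huv
  have hx : (x, y) ∈ orbEB E X B u v := by
    refine ⟨e, b, hb, ?_⟩
    simp only [Prod.mk.injEq]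
    constructor
    · show x = (e + b) +ᵥ u
      rw [h1, vadd_vadd, char2_add_self, zero_vadd]
    · show y = e +ᵥ v
      rw [h2, vadd_vadd, char2_add_self, zero_vadd]
  exact le_antisymm (orbEB_mem_mono E X ⟨e, b, hb, by rw [Prod.ext_iff]; exact ⟨h1, h2⟩⟩)
    (orbEB_mem_mono E X hx)

theorem mem_of_isOrbEB {A B C : Submodule (ZMod 2) E} {M : Set (X × X)}
    (hM : IsOrbEB E X A B C M) {u v : X} (h : (u, v) ∈ M) :
    u ∈ XA E X A ∧ v ∈ XA E X C := by
  obtain ⟨x₀, y₀, hx₀, hy₀, rfl⟩ := hM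
  obtain ⟨e, b, _, huv⟩ := h
  simp only [Prod.mk.injEq] at huv
  obtain ⟨h1, h2⟩ := huv
  rw [show u = (e + b) +ᵥ x₀ from h1, show v = e +ᵥ y₀ from h2]
  exact ⟨XA_vadd E X A _ hx₀, XA_vadd E X C _ hy₀⟩

theorem mem_of_isOrb2 {D D' : Submodule (ZMod 2) E} {O : Set (X × X)}
    (hO : IsOrb2 E X D D' O) {u v : X} (h : (u, v) ∈ O) :
    u ∈ XA E X D ∧ v ∈ XA E X D' := by
  obtain ⟨x₀, y₀, hx₀, hy₀, rfl⟩ := hO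
  obtain ⟨e, huv⟩ := h
  simp only [Prod.mk.injEq] at huv
  obtain ⟨h1, h2⟩ := huv
  rw [show u = e +ᵥ x₀ from h1, show v = e +ᵥ y₀ from h2]
  exact ⟨XA_vadd E X D _ hx₀, XA_vadd E X D' _ hy₀⟩

theorem orb2_vadd {x y u v : X} (h : (u, v) ∈ orb2 E X x y) (e : E) :
    (e +ᵥ u, e +ᵥ v) ∈ orb2 E X x y := by
  obtain ⟨e₁, huv⟩ := h
  simp only [Prod.mk.injEq] at huv
  obtain ⟨h1, h2⟩ := huv
  refine ⟨e + e₁, ?_⟩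
  simp only [Prod.mk.injEq]
  constructor
  · show e +ᵥ u = _
    rw [show u = e₁ +ᵥ x from h1, vadd_vadd]
  · show e +ᵥ v = _
    rw [show v = e₁ +ᵥ y from h2, vadd_vadd]

theorem p1_orbEB (B : Submodule (ZMod 2) E) (x y : X) :
    p1 X (orbEB E X B x y) = orb E X x := by
  ext u
  simp only [p1, Set.mem_image, orb, Set.mem_setOf_eq]
  constructor
  · rintro ⟨⟨w1, w2⟩, ⟨e, b, hb, hw⟩, rfl⟩
    simp only [Prod.mk.injEq] at hw
    exact ⟨e + b, hw.1⟩
  · rintro ⟨e, rfl⟩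
    exact ⟨(e +ᵥ x, e +ᵥ y), ⟨e, 0, zero_mem _, by simp⟩, rfl⟩

/-! #### Evaluation lemmas -/

theorem bSum_apply (A B C : Submodule (ZMod 2) E) (M : Set (X × X))
    (α : Dl E (A ⊓ B ⊓ C)) (q : (X × X) × Dl E (A ⊓ C)) :
    bSum E X A B C M α q
      = if q.1 ∈ M ∧ res E (leAC E A B C) q.2 = α then 1 else 0 := by
  unfold bSum
  simp only [finsum_eq_if]
  rw [finsum_eq_sum_of_fintype]
  rw [Finset.sum_apply]
  rw [Finset.sum_eq_single q.2]
  · by_cases h1 : res E (leAC E A B C) q.2 = α <;> by_cases h2 : q.1 ∈ M <;>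
      simp [h1, h2, br]
  · intro ε _ hne
    have hq : ¬(q.2 = ε) := fun h => hne h.symm
    by_cases h1 : res E (leAC E A B C) ε = α <;> simp [h1, br, hq]
  · intro h
    exact absurd (Finset.mem_univ _) h

theorem emb_apply_self (P Q : Submodule (ZMod 2) E)
    (g : (X × X) × Dl E (P ⊓ Q) → ℂ) : emb E X P Q g P Q = g := by
  funext p
  unfold emb
  rw [dif_pos ⟨rfl, rfl⟩]
  have : cast (by rw []) p.2 = p.2 := cast_eq _ _
  rw [show (cast (of_eq_true (Eq.trans (congrArg (fun x => x = Dl E (P ⊓ Q)) rfl) (eq_self (Dl E (P ⊓ Q))))) p.2 : Dl E (P ⊓ Q)) = p.2 from cast_eq _ _]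

theorem emb_apply_ne (P Q P' Q' : Submodule (ZMod 2) E)
    (g : (X × X) × Dl E (P ⊓ Q) → ℂ) (h : ¬(P = P' ∧ Q = Q')) :
    emb E X P Q g P' Q' = 0 := by
  funext p
  unfold emb
  rw [dif_neg h]
  rfl

theorem conv_zero_left (A B C : Submodule (ZMod 2) E)
    (f₂ : (X × X) × Dl E (B ⊓ C) → ℂ) : conv E X A B C 0 f₂ = 0 := by
  funext p
  unfold conv
  simp only [Pi.zero_apply, zero_mul, finsum_zero, zero_div]

theorem conv_zero_right (A B C : Submodule (ZMod 2) E)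
    (f₁ : (X × X) × Dl E (A ⊓ B) → ℂ) : conv E X A B C f₁ 0 = 0 := by
  funext p
  unfold conv
  simp only [Pi.zero_apply, mul_zero, zero_mul, finsum_zero, zero_div]

theorem mulFF_emb_zero (A C D D' : Submodule (ZMod 2) E)
    (g : (X × X) × Dl E (A ⊓ C) → ℂ) (h : (X × X) × Dl E (D ⊓ D') → ℂ)
    (hCD : C ≠ D) : mulFF E X (emb E X A C g) (emb E X D D' h) = 0 := by
  funext A' C'
  show (∑ᶠ B', conv E X A' B' C' (emb E X A C g A' B') (emb E X D D' h B' C')) = 0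
  have hz : ∀ B', conv E X A' B' C' (emb E X A C g A' B') (emb E X D D' h B' C') = 0 := by
    intro B'
    by_cases hB : C = B'
    · rw [emb_apply_ne E X D D' B' C' h (fun hc => hCD (hB.trans hc.1.symm))]
      exact conv_zero_right E X A' B' C' _
    · rw [emb_apply_ne E X A C A' B' g (fun hc => hB hc.2)]
      exact conv_zero_left E X A' B' C' _
  rw [finsum_congr hz, finsum_zero]

theorem mulFF_emb (A C D' : Submodule (ZMod 2) E)
    (g : (X × X) × Dl E (A ⊓ C) → ℂ) (h : (X × X) × Dl E (C ⊓ D') → ℂ) :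
    mulFF E X (emb E X A C g) (emb E X C D' h)
      = emb E X A D' (conv E X A C D' g h) := by
  funext A' C'
  show (∑ᶠ B', conv E X A' B' C' (emb E X A C g A' B') (emb E X C D' h B' C')) = _
  have hsingle := finsum_eq_single
    (fun B' => conv E X A' B' C' (emb E X A C g A' B') (emb E X C D' h B' C')) C
    (fun B' hB' => by
      beta_reduce
      rw [emb_apply_ne E X C D' B' C' h (fun hc => hB' hc.1.symm)]
      exact conv_zero_right E X A' B' C' _)
  rw [hsingle]
  beta_reduce
  by_cases hA : A = A'
  · subst hA
    by_cases hC' : D' = C'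
    · subst hC'
      rw [emb_apply_self, emb_apply_self, emb_apply_self]
    · rw [emb_apply_ne E X C D' C C' h (fun hc => hC' hc.2),
        emb_apply_ne E X A D' A C' _ (fun hc => hC' hc.2)]
      exact conv_zero_right E X A C C' _
  · rw [emb_apply_ne E X A C A' C g (fun hc => hA hc.1),
      emb_apply_ne E X A D' A' C' _ (fun hc => hA hc.1)]
    exact conv_zero_left E X A' C C' _

/-! #### The solution sets -/

/-- The set of pairs `(y, ε₁)` contributing to the convolution at `p`. -/
def Sset (A B C D' : Submodule (ZMod 2) E) (M O' : Set (X × X))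
    (α : Dl E (A ⊓ B ⊓ C)) (ε' : Dl E (C ⊓ D'))
    (p : (X × X) × Dl E (A ⊓ D')) : Set (X × Dl E (A ⊓ C)) :=
  {w | w.1 ∈ XA E X C ∧ (p.1.1, w.1) ∈ M ∧ res E (leAC E A B C) w.2 = α ∧
       (w.1, p.1.2) ∈ O' ∧
       res E (leAB E A C D') w.2 + res E (leBC E A C D') ε'
         + res E (leAC E A C D') p.2 = 0}

/-- The `(A ⊓ D')`-orbit of a point of `X`. -/
def cAD (A D' : Submodule (ZMod 2) E) (y : X) : Set X :=
  {u | ∃ a ∈ A ⊓ D', u = a +ᵥ y}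

/-- The quotient of `Sset` by the `(A ⊓ D')`-action on the first coordinate. -/
def Tset (A B C D' : Submodule (ZMod 2) E) (M O' : Set (X × X))
    (α : Dl E (A ⊓ B ⊓ C)) (ε' : Dl E (C ⊓ D'))
    (p : (X × X) × Dl E (A ⊓ D')) : Set (Set X × Dl E (A ⊓ C)) :=
  (fun w => (cAD E X A D' w.1, w.2)) '' Sset E X A B C D' M O' α ε' p

theorem mem_cAD_self (A D' : Submodule (ZMod 2) E) (y : X) : y ∈ cAD E X A D' y :=
  ⟨0, zero_mem _, (zero_vadd E y).symm⟩

theorem cAD_vadd (A D' : Submodule (ZMod 2) E) {a : E} (ha : a ∈ A ⊓ D') (y : X) :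
    cAD E X A D' (a +ᵥ y) = cAD E X A D' y := by
  ext u
  simp only [cAD, Set.mem_setOf_eq]
  constructor
  · rintro ⟨a', ha', rfl⟩
    exact ⟨a' + a, add_mem ha' ha, by rw [vadd_vadd]⟩
  · rintro ⟨a', ha', rfl⟩
    exact ⟨a' + a, add_mem ha' ha, by rw [vadd_vadd, add_assoc, char2_add_self, add_zero]⟩

theorem mem_orbEB_act {A B C : Submodule (ZMod 2) E} {M : Set (X × X)}
    (hM : IsOrbEB E X A B C M) {u v : X} (h : (u, v) ∈ M) (e b : E) (hb : b ∈ B) :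
    ((e + b) +ᵥ u, e +ᵥ v) ∈ M := by
  obtain ⟨x₀, y₀, _, _, rfl⟩ := hM
  rw [← orbEB_eq_of_mem E X h]
  exact ⟨e, b, hb, rfl⟩

theorem mem_orb2_act {D D' : Submodule (ZMod 2) E} {O : Set (X × X)}
    (hO : IsOrb2 E X D D' O) {u v : X} (h : (u, v) ∈ O) (e : E) :
    (e +ᵥ u, e +ᵥ v) ∈ O := by
  obtain ⟨x₀, y₀, _, _, rfl⟩ := hO
  exact orb2_vadd E X h e

/-- Stability of `Sset` under the `(A ⊓ D')`-action. -/
theorem Sset_vadd {A B C D' : Submodule (ZMod 2) E} {M O' : Set (X × X)}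
    {α : Dl E (A ⊓ B ⊓ C)} {ε' : Dl E (C ⊓ D')}
    (hM : IsOrbEB E X A B C M) (hO' : IsOrb2 E X C D' O')
    {x z : X} {ε : Dl E (A ⊓ D')} {w : X × Dl E (A ⊓ C)}
    (hw : w ∈ Sset E X A B C D' M O' α ε' ((x, z), ε))
    {a : E} (ha : a ∈ A ⊓ D') :
    (a +ᵥ w.1, w.2) ∈ Sset E X A B C D' M O' α ε' ((x, z), ε) := by
  obtain ⟨h1, h2, h3, h4, h5⟩ := hw
  have hxA : x ∈ XA E X A := (mem_of_isOrbEB E X hM h2).1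
  have hzD : z ∈ XA E X D' := (mem_of_isOrb2 E X hO' h4).2
  obtain ⟨haA, haD⟩ := Submodule.mem_inf.mp ha
  refine ⟨XA_vadd E X C a h1, ?_, h3, ?_, h5⟩
  · have h6 := mem_orbEB_act E X hM h2 a 0 (zero_mem B)
    rw [add_zero, vadd_eq_self_of_mem E X hxA haA] at h6
    exact h6
  · have h6 := mem_orb2_act E X hO' h4 a
    rw [vadd_eq_self_of_mem E X hzD haD] at h6
    exact h6

/-- Equivariance of `Sset` under the `E × B`-action together with a change of `ε`
within the same fibre. -/
theorem Sset_map {A B C D' : Submodule (ZMod 2) E} {M O' : Set (X × X)}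
    {α : Dl E (A ⊓ B ⊓ C)} {ε' : Dl E (C ⊓ D')}
    (hM : IsOrbEB E X A B C M) (hO' : IsOrb2 E X C D' O')
    (x z : X) (ε εt : Dl E (A ⊓ D')) (e b : E) (hb : b ∈ B)
    (δ : Dl E (A ⊓ C))
    (hδ1 : res E (leAC E A B C) δ = 0)
    (hδ2 : res E (leAB E A C D') δ + res E (leAC E A C D') ε
      + res E (leAC E A C D') εt = 0)
    {w : X × Dl E (A ⊓ C)}
    (hw : w ∈ Sset E X A B C D' M O' α ε' ((x, z), ε)) :
    (e +ᵥ w.1, w.2 + δ) ∈ Sset E X A B C D' M O' α ε' (((e + b) +ᵥ x, e +ᵥ z), εt) := by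
  obtain ⟨h1, h2, h3, h4, h5⟩ := hw
  refine ⟨XA_vadd E X C e h1, ?_, ?_, ?_, ?_⟩
  · exact mem_orbEB_act E X hM h2 e b hb
  · rw [res_add, hδ1, h3, add_zero]
  · exact mem_orb2_act E X hO' h4 e
  · rw [res_add]
    set a := res E (leAB E A C D') w.2
    set d := res E (leAB E A C D') δ
    set pp := res E (leBC E A C D') ε'
    set q := res E (leAC E A C D') ε
    set r := res E (leAC E A C D') εt
    have hsum : (a + pp + q) + (d + q + r) = ((a + d) + pp + r) + (q + q) := by abel
    calc (a + d) + pp + r = ((a + d) + pp + r) + (q + q) := by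
          rw [char2_add_self, add_zero]
      _ = (a + pp + q) + (d + q + r) := hsum.symm
      _ = 0 + 0 := by rw [h5, hδ2]
      _ = 0 := add_zero 0

/-- If `Sset` is nonempty at `p = ((x,z),ε)` then `(x,z) ∈ X²_{AD'}` and `x ∈ p₁M`. -/
theorem Sset_nonempty_mem {A B C D' : Submodule (ZMod 2) E} {M O' : Set (X × X)}
    {α : Dl E (A ⊓ B ⊓ C)} {ε' : Dl E (C ⊓ D')}
    (hM : IsOrbEB E X A B C M) (hO' : IsOrb2 E X C D' O')
    {x z : X} {ε : Dl E (A ⊓ D')} {w : X × Dl E (A ⊓ C)}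
    (hw : w ∈ Sset E X A B C D' M O' α ε' ((x, z), ε)) :
    x ∈ XA E X A ∧ z ∈ XA E X D' ∧ x ∈ p1 X M := by
  obtain ⟨_, h2, _, h4, _⟩ := hw
  exact ⟨(mem_of_isOrbEB E X hM h2).1, (mem_of_isOrb2 E X hO' h4).2,
    ⟨(x, w.1), h2, rfl⟩⟩

/-- Evaluation of the convolution as a point count. -/
theorem conv_eval (A B C D' : Submodule (ZMod 2) E) (M O' : Set (X × X))
    (α : Dl E (A ⊓ B ⊓ C)) (ε' : Dl E (C ⊓ D')) (x z : X) (ε : Dl E (A ⊓ D')) :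
    conv E X A C D' (bSum E X A B C M α) (br E X C D' O' ε') ((x, z), ε)
      = (Nat.card ↥(Sset E X A B C D' M O' α ε' ((x, z), ε)) : ℂ)
          * (Nat.card ↥(A ⊓ C ⊓ D') : ℂ) / (Nat.card ↥(A ⊓ D') : ℂ) := by
  have key : (∑ᶠ (y : X) (_ : y ∈ XA E X C) (ε₁ : Dl E (A ⊓ C)) (ε₂ : Dl E (C ⊓ D'))
      (_ : res E (leAB E A C D') ε₁ + res E (leBC E A C D') ε₂
            + res E (leAC E A C D') ε = 0),
      bSum E X A B C M α ((x, y), ε₁) * br E X C D' O' ε' ((y, z), ε₂))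
      = (Nat.card ↥(Sset E X A B C D' M O' α ε' ((x, z), ε)) : ℂ) := by
    rw [finsum_eq_sum_of_fintype]
    have step1 : ∀ y : X, (∑ᶠ (_ : y ∈ XA E X C) (ε₁ : Dl E (A ⊓ C)) (ε₂ : Dl E (C ⊓ D'))
        (_ : res E (leAB E A C D') ε₁ + res E (leBC E A C D') ε₂
              + res E (leAC E A C D') ε = 0),
        bSum E X A B C M α ((x, y), ε₁) * br E X C D' O' ε' ((y, z), ε₂))
        = ∑ ε₁ : Dl E (A ⊓ C),
            if (y, ε₁) ∈ Sset E X A B C D' M O' α ε' ((x, z), ε) then (1 : ℂ) else 0 := by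
      intro y
      rw [finsum_eq_if]
      by_cases hy : y ∈ XA E X C
      · rw [if_pos hy, finsum_eq_sum_of_fintype]
        refine Finset.sum_congr rfl (fun ε₁ _ => ?_)
        rw [finsum_eq_sum_of_fintype]
        rw [Finset.sum_eq_single ε']
        · rw [finsum_eq_if, bSum_apply]
          by_cases h1 : (x, y) ∈ M <;>
            by_cases h2 : res E (leAC E A B C) ε₁ = α <;>
            by_cases h3 : (y, z) ∈ O' <;>
            by_cases h4 : res E (leAB E A C D') ε₁ + res E (leBC E A C D') ε'
              + res E (leAC E A C D') ε = 0 <;>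
            simp [Sset, Set.mem_setOf_eq, br, hy, h1, h2, h3, h4]
        · intro ε₂ _ hne
          rw [finsum_eq_if]
          by_cases hc : res E (leAB E A C D') ε₁ + res E (leBC E A C D') ε₂
              + res E (leAC E A C D') ε = 0 <;> simp [br, hne, hc]
        · intro h
          exact absurd (Finset.mem_univ _) h
      · rw [if_neg hy]
        symm
        apply Finset.sum_eq_zero
        intro ε₁ _
        rw [if_neg]
        intro hmem
        exact hy hmem.1
    rw [Finset.sum_congr rfl (fun y _ => step1 y)]
    rw [← Finset.sum_product']
    rw [Finset.univ_product_univ]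
    have heq : ∀ q : X × Dl E (A ⊓ C),
        (if (q.1, q.2) ∈ Sset E X A B C D' M O' α ε' ((x, z), ε) then (1 : ℂ) else 0)
        = (if q ∈ Sset E X A B C D' M O' α ε' ((x, z), ε) then (1 : ℂ) else 0) := by
      intro q; rw [Prod.mk.eta]
    rw [Finset.sum_congr rfl (fun q _ => heq q)]
    rw [Finset.sum_boole]
    congr 1
    rw [Nat.card_eq_fintype_card]
    exact (Fintype.card_subtype _).symm
  show (∑ᶠ (y : X) (_ : y ∈ XA E X C) (ε₁ : Dl E (A ⊓ C)) (ε₂ : Dl E (C ⊓ D'))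
      (_ : res E (leAB E A C D') ε₁ + res E (leBC E A C D') ε₂
            + res E (leAC E A C D') ε = 0),
      bSum E X A B C M α ((x, y), ε₁) * br E X C D' O' ε' ((y, z), ε₂))
      * (Nat.card ↥(A ⊓ C ⊓ D') : ℂ) / (Nat.card ↥(A ⊓ D') : ℂ) = _
  rw [key]

/-- Orbit counting: `|Sset| ⬝ |A∩C∩D'| = |Tset| ⬝ |A∩D'|`. -/
theorem card_Sset {A B C D' : Submodule (ZMod 2) E} {M O' : Set (X × X)}
    {α : Dl E (A ⊓ B ⊓ C)} {ε' : Dl E (C ⊓ D')}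
    (hM : IsOrbEB E X A B C M) (hO' : IsOrb2 E X C D' O')
    (p : (X × X) × Dl E (A ⊓ D')) :
    Nat.card ↥(Sset E X A B C D' M O' α ε' p) * Nat.card ↥(A ⊓ C ⊓ D')
      = Nat.card ↥(Tset E X A B C D' M O' α ε' p) * Nat.card ↥(A ⊓ D') := by
  obtain ⟨⟨x, z⟩, ε⟩ := p
  set S := Sset E X A B C D' M O' α ε' ((x, z), ε) with hSdef
  set ρ : X × Dl E (A ⊓ C) → Set X × Dl E (A ⊓ C) :=
    fun w => (cAD E X A D' w.1, w.2) with hρ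
  have hcS : Nat.card ↥S = S.toFinset.card := by
    rw [Set.toFinset_card, Nat.card_eq_fintype_card]
  have hcT : Nat.card ↥(Tset E X A B C D' M O' α ε' ((x, z), ε))
      = (S.toFinset.image ρ).card := by
    have h0 : Tset E X A B C D' M O' α ε' ((x, z), ε) = ρ '' S := rfl
    rw [h0, Nat.card_eq_fintype_card, ← Set.toFinset_card, Set.toFinset_image]
  have hmain : S.toFinset.card
      = ∑ u ∈ S.toFinset.image ρ, (S.toFinset.filter (fun w => ρ w = u)).card :=
    Finset.card_eq_sum_card_fiberwise (fun w hw => Finset.mem_image_of_mem ρ hw)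
  have hfiber : ∀ u ∈ S.toFinset.image ρ,
      (S.toFinset.filter (fun w => ρ w = u)).card * Nat.card ↥(A ⊓ C ⊓ D')
        = Nat.card ↥(A ⊓ D') := by
    intro u hu
    obtain ⟨w₀, hw₀, rfl⟩ := Finset.mem_image.mp hu
    rw [Set.mem_toFinset] at hw₀
    have hyC : w₀.1 ∈ XA E X C := hw₀.1
    have hfil : S.toFinset.filter (fun w => ρ w = ρ w₀)
        = Finset.image (fun a : ↥(A ⊓ D') => ((a : E) +ᵥ w₀.1, w₀.2)) Finset.univ := by
      ext w
      simp only [Finset.mem_filter, Finset.mem_image, Set.mem_toFinset,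
        Finset.mem_univ, true_and]
      constructor
      · rintro ⟨hwS, hρw⟩
        have h1 : cAD E X A D' w.1 = cAD E X A D' w₀.1 := congrArg Prod.fst hρw
        have h2 : w.2 = w₀.2 := congrArg (Prod.snd : Set X × Dl E (A ⊓ C) → Dl E (A ⊓ C)) hρw
        have h3 : w.1 ∈ cAD E X A D' w₀.1 := h1 ▸ mem_cAD_self E X A D' w.1
        obtain ⟨a, ha, haeq⟩ := h3
        exact ⟨⟨a, ha⟩, Prod.ext haeq.symm h2.symm⟩
      · rintro ⟨a, rfl⟩
        refine ⟨Sset_vadd E X hM hO' hw₀ a.2, ?_⟩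
        show (cAD E X A D' ((a : E) +ᵥ w₀.1), w₀.2) = (cAD E X A D' w₀.1, w₀.2)
        rw [cAD_vadd E X A D' a.2 w₀.1]
    rw [hfil]
    have hAD : Nat.card ↥(A ⊓ D') = (Finset.univ : Finset ↥(A ⊓ D')).card := by
      rw [Nat.card_eq_fintype_card, Finset.card_univ]
    rw [hAD]
    have hmain2 : (Finset.univ : Finset ↥(A ⊓ D')).card
        = ∑ w ∈ Finset.image (fun a : ↥(A ⊓ D') => ((a : E) +ᵥ w₀.1, w₀.2)) Finset.univ,
            (Finset.univ.filter
              (fun a : ↥(A ⊓ D') => ((a : E) +ᵥ w₀.1, w₀.2) = w)).card :=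
      Finset.card_eq_sum_card_fiberwise
        (fun a _ => Finset.mem_image_of_mem _ (Finset.mem_univ a))
    rw [hmain2]
    have hfib2 : ∀ w ∈ Finset.image
          (fun a : ↥(A ⊓ D') => ((a : E) +ᵥ w₀.1, w₀.2)) Finset.univ,
        (Finset.univ.filter
            (fun a : ↥(A ⊓ D') => ((a : E) +ᵥ w₀.1, w₀.2) = w)).card
          = Nat.card ↥(A ⊓ C ⊓ D') := by
      intro w hw
      obtain ⟨a₀, _, rfl⟩ := Finset.mem_image.mp hw
      have hstep : Finset.univ.filter
          (fun a : ↥(A ⊓ D') =>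
            ((a : E) +ᵥ w₀.1, w₀.2) = ((a₀ : E) +ᵥ w₀.1, w₀.2))
          = Finset.image
              (fun c : ↥(A ⊓ C ⊓ D') => a₀ + Submodule.inclusion (leAC E A C D') c)
              Finset.univ := by
        ext a
        simp only [Finset.mem_filter, Finset.mem_image, Finset.mem_univ, true_and,
          Prod.mk.injEq, and_true]
        constructor
        · intro ha
          have h7 : ((a : E) + (a₀ : E)) +ᵥ w₀.1 = w₀.1 := by
            calc ((a : E) + (a₀ : E)) +ᵥ w₀.1
                = (a : E) +ᵥ ((a₀ : E) +ᵥ w₀.1) := (vadd_vadd _ _ _).symm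
              _ = (a : E) +ᵥ ((a : E) +ᵥ w₀.1) := by rw [← ha]
              _ = ((a : E) + (a : E)) +ᵥ w₀.1 := vadd_vadd _ _ _
              _ = w₀.1 := by rw [char2_add_self, zero_vadd]
          have hC : (a : E) + (a₀ : E) ∈ C := by
            have h8 : (a : E) + (a₀ : E) ∈ stabSet E X w₀.1 := h7
            rw [hyC] at h8
            exact h8
          obtain ⟨haA, haD⟩ := Submodule.mem_inf.mp a.2
          obtain ⟨ha₀A, ha₀D⟩ := Submodule.mem_inf.mp a₀.2
          have hmem : (a : E) + (a₀ : E) ∈ A ⊓ C ⊓ D' := by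
            rw [Submodule.mem_inf, Submodule.mem_inf]
            exact ⟨⟨add_mem haA ha₀A, hC⟩, add_mem haD ha₀D⟩
          refine ⟨⟨(a : E) + (a₀ : E), hmem⟩, ?_⟩
          apply Subtype.ext
          show (a₀ : E) + ((a : E) + (a₀ : E)) = (a : E)
          rw [add_comm (a : E) (a₀ : E), ← add_assoc, char2_add_self, zero_add]
        · rintro ⟨c, rfl⟩
          obtain ⟨hcAC, _⟩ := Submodule.mem_inf.mp c.2
          obtain ⟨_, hcC⟩ := Submodule.mem_inf.mp hcAC
          show ((a₀ + Submodule.inclusion (leAC E A C D') c : ↥(A ⊓ D')) : E) +ᵥ w₀.1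
            = (a₀ : E) +ᵥ w₀.1
          have hval : ((a₀ + Submodule.inclusion (leAC E A C D') c : ↥(A ⊓ D')) : E)
              = (a₀ : E) + (c : E) := rfl
          rw [hval, ← vadd_vadd, vadd_eq_self_of_mem E X hyC hcC]
      rw [hstep]
      have hinj : Function.Injective
          (fun c : ↥(A ⊓ C ⊓ D') => a₀ + Submodule.inclusion (leAC E A C D') c) := by
        intro c₁ c₂ h
        exact Submodule.inclusion_injective _ (add_left_cancel h)
      rw [Finset.card_image_of_injective _ hinj, Finset.card_univ,
        Nat.card_eq_fintype_card]
    rw [Finset.sum_congr rfl hfib2, Finset.sum_const, smul_eq_mul]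
  calc Nat.card ↥S * Nat.card ↥(A ⊓ C ⊓ D')
      = (∑ u ∈ S.toFinset.image ρ, (S.toFinset.filter (fun w => ρ w = u)).card)
          * Nat.card ↥(A ⊓ C ⊓ D') := by rw [hcS, hmain]
    _ = ∑ u ∈ S.toFinset.image ρ,
          (S.toFinset.filter (fun w => ρ w = u)).card * Nat.card ↥(A ⊓ C ⊓ D') := by
        rw [Finset.sum_mul]
    _ = ∑ _u ∈ S.toFinset.image ρ, Nat.card ↥(A ⊓ D') :=
        Finset.sum_congr rfl hfiber
    _ = (S.toFinset.image ρ).card * Nat.card ↥(A ⊓ D') := by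
        rw [Finset.sum_const, smul_eq_mul]
    _ = Nat.card ↥(Tset E X A B C D' M O' α ε' ((x, z), ε)) * Nat.card ↥(A ⊓ D') := by
        rw [hcT]

/-- Constancy of `|Sset|` along an `E × B`-orbit and an `α''`-fibre. -/
theorem card_Sset_block {A B C D' : Submodule (ZMod 2) E} {M O' : Set (X × X)}
    {α : Dl E (A ⊓ B ⊓ C)} {ε' : Dl E (C ⊓ D')}
    (hM : IsOrbEB E X A B C M) (hO' : IsOrb2 E X C D' O')
    (x z : X) (ε εt : Dl E (A ⊓ D')) (e b : E) (hb : b ∈ B)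
    (hres : res E (leAC E A B D') ε = res E (leAC E A B D') εt) :
    Nat.card ↥(Sset E X A B C D' M O' α ε' ((x, z), ε))
      = Nat.card ↥(Sset E X A B C D' M O' α ε' (((e + b) +ᵥ x, e +ᵥ z), εt)) := by
  set γ : Dl E (A ⊓ C ⊓ D') := res E (leAC E A C D') ε + res E (leAC E A C D') εt
    with hγ
  have hcompat : ∀ (v : E) (h1 : v ∈ A ⊓ B ⊓ C) (h2 : v ∈ A ⊓ C ⊓ D'),
      (0 : Dl E (A ⊓ B ⊓ C)) ⟨v, h1⟩ = γ ⟨v, h2⟩ := by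
    intro v h1 h2
    obtain ⟨hAB, hC⟩ := Submodule.mem_inf.mp h1
    obtain ⟨hA, hB⟩ := Submodule.mem_inf.mp hAB
    obtain ⟨hAC, hD⟩ := Submodule.mem_inf.mp h2
    have hvABD : v ∈ A ⊓ B ⊓ D' := by
      rw [Submodule.mem_inf, Submodule.mem_inf]; exact ⟨⟨hA, hB⟩, hD⟩
    have hvAD : v ∈ A ⊓ D' := leAC E A B D' hvABD
    have h3 := LinearMap.congr_fun hres ⟨v, hvABD⟩
    have h4 : γ ⟨v, h2⟩ = ε ⟨v, hvAD⟩ + εt ⟨v, hvAD⟩ := rfl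
    have h5 : ε ⟨v, hvAD⟩ = εt ⟨v, hvAD⟩ := h3
    rw [h4, h5, char2_add_self]
    exact LinearMap.zero_apply _
  obtain ⟨δ, hδ1, hδ2⟩ := glue_res E (leAC E A B C) (leAB E A C D') 0 γ hcompat
  have hδ2' : res E (leAB E A C D') δ + res E (leAC E A C D') ε
      + res E (leAC E A C D') εt = 0 := by
    rw [hδ2, hγ]
    set q := res E (leAC E A C D') ε
    set r := res E (leAC E A C D') εt
    have hh : (q + r) + q + r = (q + q) + (r + r) := by abel
    rw [hh, char2_add_self, char2_add_self, add_zero]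
  have hδ2'' : res E (leAB E A C D') δ + res E (leAC E A C D') εt
      + res E (leAC E A C D') ε = 0 := by
    rw [add_right_comm]
    exact hδ2'
  have hxx : (e + b) +ᵥ ((e + b) +ᵥ x) = x := by
    rw [vadd_vadd, char2_add_self, zero_vadd]
  have hzz : e +ᵥ (e +ᵥ z) = z := by
    rw [vadd_vadd, char2_add_self, zero_vadd]
  have hδδ : ∀ u : Dl E (A ⊓ C), u + δ + δ = u := fun u => by
    rw [add_assoc, char2_add_self, add_zero]
  have hback : ∀ w ∈ Sset E X A B C D' M O' α ε' (((e + b) +ᵥ x, e +ᵥ z), εt),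
      ((e +ᵥ w.1, w.2 + δ) : X × Dl E (A ⊓ C))
        ∈ Sset E X A B C D' M O' α ε' ((x, z), ε) := by
    intro w hw
    have h6 := Sset_map E X hM hO' ((e + b) +ᵥ x) (e +ᵥ z) εt ε e b hb δ hδ1 hδ2'' hw
    rw [hxx, hzz] at h6
    exact h6
  exact Nat.card_congr
    { toFun := fun w => ⟨(e +ᵥ w.1.1, w.1.2 + δ),
        Sset_map E X hM hO' x z ε εt e b hb δ hδ1 hδ2' w.2⟩
      invFun := fun w => ⟨(e +ᵥ w.1.1, w.1.2 + δ), hback _ w.2⟩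
      left_inv := fun w => Subtype.ext (Prod.ext
        (by show e +ᵥ (e +ᵥ w.1.1) = w.1.1; rw [vadd_vadd, char2_add_self, zero_vadd])
        (hδδ w.1.2))
      right_inv := fun w => Subtype.ext (Prod.ext
        (by show e +ᵥ (e +ᵥ w.1.1) = w.1.1; rw [vadd_vadd, char2_add_self, zero_vadd])
        (hδδ w.1.2)) }

theorem card_Tset_block {A B C D' : Submodule (ZMod 2) E} {M O' : Set (X × X)}
    {α : Dl E (A ⊓ B ⊓ C)} {ε' : Dl E (C ⊓ D')}
    (hM : IsOrbEB E X A B C M) (hO' : IsOrb2 E X C D' O')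
    (x z : X) (ε εt : Dl E (A ⊓ D')) (e b : E) (hb : b ∈ B)
    (hres : res E (leAC E A B D') ε = res E (leAC E A B D') εt) :
    Nat.card ↥(Tset E X A B C D' M O' α ε' ((x, z), ε))
      = Nat.card ↥(Tset E X A B C D' M O' α ε' (((e + b) +ᵥ x, e +ᵥ z), εt)) := by
  have h1 := card_Sset E X hM hO' (α := α) (ε' := ε') ((x, z), ε)
  have h2 := card_Sset E X hM hO' (α := α) (ε' := ε') (((e + b) +ᵥ x, e +ᵥ z), εt)
  have h3 := card_Sset_block E X hM hO' x z ε εt e b hb hres (α := α) (ε' := ε')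
  have hpos : 0 < Nat.card ↥(A ⊓ D') := Nat.card_pos
  apply Nat.eq_of_mul_eq_mul_right hpos
  rw [← h1, ← h2, h3]

/-- Theorem 1.6(b): for `f ∈ 𝓑_{oB}` and any basis element
`[𝒪'₁]^{ε'} ∈ 𝓕_{DD'}`, the product `f ⋆ [𝒪'₁]^{ε'}` is an `ℕ`-linear combination
of elements of `𝓑_{oB}`. -/
theorem statement14 (A B : Submodule (ZMod 2) E) (o : Set X)
    (ho : ∃ x ∈ XA E X A, o = orb E X x)
    (f : FF E X) (hf : f ∈ BoB E X A B o)
    (D D' : Submodule (ZMod 2) E) (O' : Set (X × X))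
    (hO' : IsOrb2 E X D D' O') (ε' : Dl E (D ⊓ D')) :
    ∃ c : FF E X →₀ ℕ, ↑c.support ⊆ BoB E X A B o ∧
      mulFF E X f (emb E X D D' (br E X D D' O' ε')) =
        c.sum fun v n => (n : ℂ) • v := by
  classical
  obtain ⟨x₀, hx₀, ho⟩ := ho
  obtain ⟨C, hfC⟩ := Set.mem_iUnion.mp hf
  obtain ⟨M, α, hM, hp1, rfl⟩ := hfC
  by_cases hCD : C = D
  · subst hCD
    have hmul := mulFF_emb E X A C D' (bSum E X A B C M α) (br E X C D' O' ε')
    set reps : Finset (X × X) :=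
      Finset.univ.filter (fun q => q ∈ X2 E X A D' ∧ q.1 ∈ o) with hreps
    set orbs : Finset (Set (X × X)) :=
      reps.image (fun q => orbEB E X B q.1 q.2) with horbs
    set pt : Set (X × X) → X × X :=
      fun S => if h : S.Nonempty then h.choose else (x₀, x₀) with hpt
    set epsc : Dl E (A ⊓ B ⊓ D') → Dl E (A ⊓ D') :=
      fun a'' => (res_surjective E (leAC E A B D') a'').choose with hepsc
    set N : Set (X × X) → Dl E (A ⊓ B ⊓ D') → ℕ :=
      fun S a'' => Nat.card ↥(Tset E X A B C D' M O' α ε' (pt S, epsc a'')) with hN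
    refine ⟨∑ q ∈ orbs ×ˢ (Finset.univ : Finset (Dl E (A ⊓ B ⊓ D'))),
      Finsupp.single (emb E X A D' (bSum E X A B D' q.1 q.2)) (N q.1 q.2), ?_, ?_⟩
    · -- support
      intro g hg
      rw [Finset.mem_coe] at hg
      have hg2 := Finsupp.support_finset_sum hg
      rw [Finset.mem_biUnion] at hg2
      obtain ⟨q, hq, hgq⟩ := hg2
      have hg3 : g = emb E X A D' (bSum E X A B D' q.1 q.2) := by
        have := Finsupp.support_single_subset hgq
        rwa [Finset.mem_singleton] at this
      obtain ⟨hqo, -⟩ := Finset.mem_product.mp hq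
      obtain ⟨q', hq', hS⟩ := Finset.mem_image.mp hqo
      rw [Finset.mem_filter] at hq'
      obtain ⟨-, hq'X2, hq'o⟩ := hq'
      obtain ⟨hq1A, hq2D⟩ := Set.mem_prod.mp hq'X2
      refine Set.mem_iUnion.mpr ⟨D', ?_⟩
      refine ⟨q.1, q.2, ?_, ?_, hg3⟩
      · rw [← hS]
        exact ⟨q'.1, q'.2, hq1A, hq2D, rfl⟩
      · rw [← hS, p1_orbEB, orb_eq_of_mem E X (x := x₀) (by rwa [← ho]), ← ho]
    · rw [hmul]
      have hzero : ∀ a : FF E X, ((0 : ℕ) : ℂ) • a = 0 := fun a => by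
        rw [Nat.cast_zero, zero_smul]
      rw [← Finsupp.sum_finset_sum_index (fun a => hzero a)
        (fun a n₁ n₂ => by rw [Nat.cast_add, add_smul])]
      have hsingle : ∀ q ∈ orbs ×ˢ (Finset.univ : Finset (Dl E (A ⊓ B ⊓ D'))),
          ((Finsupp.single (emb E X A D' (bSum E X A B D' q.1 q.2))
            (N q.1 q.2)).sum fun v n => (n : ℂ) • v)
          = (N q.1 q.2 : ℂ) • emb E X A D' (bSum E X A B D' q.1 q.2) := by
        intro q _
        exact Finsupp.sum_single_index (hzero _)
      rw [Finset.sum_congr rfl hsingle]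
      funext A' C'
      funext p
      by_cases hAC' : A = A' ∧ D' = C'
      · obtain ⟨hA', hC'⟩ := hAC'
        subst hA'; subst hC'
        rw [emb_apply_self]
        simp only [Finset.sum_apply, Pi.smul_apply, smul_eq_mul]
        have hemb : ∀ q : Set (X × X) × Dl E (A ⊓ B ⊓ D'),
            emb E X A D' (bSum E X A B D' q.1 q.2) A D' p
              = bSum E X A B D' q.1 q.2 p := by
          intro q
          rw [emb_apply_self]
        obtain ⟨⟨x, z⟩, ε⟩ := p
        have hADne : (Nat.card ↥(A ⊓ D') : ℂ) ≠ 0 :=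
          Nat.cast_ne_zero.mpr Nat.card_pos.ne'
        have hFp : conv E X A C D' (bSum E X A B C M α) (br E X C D' O' ε') ((x, z), ε)
            = (Nat.card ↥(Tset E X A B C D' M O' α ε' ((x, z), ε)) : ℂ) := by
          rw [conv_eval, div_eq_iff hADne]
          exact_mod_cast card_Sset E X hM hO' ((x, z), ε)
        rw [hFp]
        have hterm : ∀ q ∈ orbs ×ˢ (Finset.univ : Finset (Dl E (A ⊓ B ⊓ D'))),
            (N q.1 q.2 : ℂ) * emb E X A D' (bSum E X A B D' q.1 q.2) A D' ((x, z), ε)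
            = (N q.1 q.2 : ℂ) *
              (if (x, z) ∈ q.1 ∧ res E (leAC E A B D') ε = q.2 then 1 else 0) := by
          intro q _
          rw [hemb, bSum_apply]
        rw [Finset.sum_congr rfl hterm]
        by_cases hsupp : (x, z) ∈ X2 E X A D' ∧ x ∈ o
        · -- main case
          rw [Finset.sum_eq_single (orbEB E X B x z, res E (leAC E A B D') ε)]
          · rw [if_pos ⟨mem_orbEB_self E X B x z, rfl⟩, mul_one]
            -- F value = N (orbEB x z) (res ε)
            have hne : (orbEB E X B x z).Nonempty := ⟨(x, z), mem_orbEB_self E X B x z⟩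
            have hpt₀ : pt (orbEB E X B x z) = hne.choose := dif_pos hne
            obtain ⟨e, b, hb, hch⟩ := hne.choose_spec
            have hres := (res_surjective E (leAC E A B D')
              (res E (leAC E A B D') ε)).choose_spec
            have hblock := card_Tset_block E X hM hO' (α := α) (ε' := ε') x z ε
              (epsc (res E (leAC E A B D') ε)) e b hb hres.symm
            rw [hblock]
            show _ = (N (orbEB E X B x z) (res E (leAC E A B D') ε) : ℂ)
            rw [hN]
            congr 2
            rw [hpt₀, hch]
          · intro q hq hne
            obtain ⟨hqo, -⟩ := Finset.mem_product.mp hq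
            rw [if_neg, mul_zero]
            rintro ⟨hmem, hres⟩
            apply hne
            obtain ⟨q', hq', hS⟩ := Finset.mem_image.mp hqo
            have : q.1 = orbEB E X B x z := by
              rw [← hS] at hmem ⊢
              exact (orbEB_eq_of_mem E X hmem).symm
            rw [Prod.ext_iff]
            exact ⟨this, hres.symm⟩
          · intro hnot
            exfalso
            apply hnot
            rw [Finset.mem_product]
            constructor
            · show orbEB E X B x z ∈ orbs
              rw [horbs]
              refine Finset.mem_image_of_mem _ (a := (x, z)) ?_
              rw [hreps, Finset.mem_filter]
              exact ⟨Finset.mem_univ _, hsupp⟩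
            · exact Finset.mem_univ _
        · -- degenerate case: both sides vanish
          have hSempty : Sset E X A B C D' M O' α ε' ((x, z), ε) = ∅ := by
            rw [Set.eq_empty_iff_forall_notMem]
            intro w hw
            obtain ⟨hxA, hzD, hxp1⟩ := Sset_nonempty_mem E X hM hO' hw
            exact hsupp ⟨Set.mem_prod.mpr ⟨hxA, hzD⟩, hp1 ▸ hxp1⟩
          have hTempty : Tset E X A B C D' M O' α ε' ((x, z), ε) = ∅ := by
            show (fun w => (cAD E X A D' w.1, w.2)) ''
              Sset E X A B C D' M O' α ε' ((x, z), ε) = ∅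
            rw [hSempty, Set.image_empty]
          rw [hTempty]
          have hc0 : (Nat.card ↥(∅ : Set (Set X × Dl E (A ⊓ C))) : ℂ) = 0 := by
            simp
          rw [hc0]
          symm
          apply Finset.sum_eq_zero
          intro q hq
          obtain ⟨hqo, -⟩ := Finset.mem_product.mp hq
          rw [if_neg, mul_zero]
          rintro ⟨hmem, -⟩
          apply hsupp
          obtain ⟨q', hq', hS⟩ := Finset.mem_image.mp hqo
          rw [Finset.mem_filter] at hq'
          obtain ⟨-, hq'X2, hq'o⟩ := hq'
          obtain ⟨hq1A, hq2D⟩ := Set.mem_prod.mp hq'X2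
          rw [← hS] at hmem
          obtain ⟨e, b, hb, hxz⟩ := hmem
          simp only [Prod.mk.injEq] at hxz
          obtain ⟨hx, hz⟩ := hxz
          constructor
          · show (x, z) ∈ XA E X A ×ˢ XA E X D'
            rw [Set.mem_prod]
            constructor
            · show x ∈ XA E X A
              rw [hx]; exact XA_vadd E X A _ hq1A
            · show z ∈ XA E X D'
              rw [hz]; exact XA_vadd E X D' _ hq2D
          · have hxq : x ∈ orb E X q'.1 := ⟨e + b, hx⟩
            have horb : orb E X q'.1 = o := by
              rw [ho]
              exact orb_eq_of_mem E X (by rwa [← ho])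
            rwa [horb] at hxq
      · -- other components vanish
        rw [emb_apply_ne E X A D' A' C' _ hAC']
        simp only [Finset.sum_apply, Pi.smul_apply, smul_eq_mul]
        symm
        apply Finset.sum_eq_zero
        intro q _
        rw [emb_apply_ne E X A D' A' C' _ hAC']
        simp
  · refine ⟨0, by simp, ?_⟩
    rw [mulFF_emb_zero E X A C D D' _ _ hCD, Finsupp.sum_zero_index]

end Lusztig
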